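/- Let G be a directed graph with nonnegative arc weights, let c, f, f' be vertices, and let P(c,f) and P(c,f') be the sets of all shortest (minimum total weight) directed paths from c to f and from c to f', respectively. Then no path in P(c,f) shares an arc with any path in P(c,f') if and only if no path in P(c,f) shares a vertex other than c with any path in P(c,f'). -/

import Mathlib

/-!
Arc-disjointness follows from vertex-disjointness away from `c`, because every arc of a simple
path starting at `c` ends at a vertex other than `c`.

Conversely, let shortest paths `p` to `f` and `q` to `f'` meet outside `c`, and let `v` be the last
vertex of `q` on `p` other than `c`. Following `p` up to `v` and then `q` gives a simple path,
since the rest of `q` avoids `p`. It is again a shortest path to `f'`: with nonnegative weights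
every prefix of a shortest path is shortest, because a walk can be shortened to a simple path of
no larger weight. This path shares with `p` the arc entering `v`.
-/

/-- `IsDiPath A a b p` asserts that the list of vertices `p` is a simple directed
path from `a` to `b` in the directed graph with arc relation `A`. -/
def IsDiPath {V : Type*} (A : V → V → Prop) (a b : V) (p : List V) : Prop :=
  p.head? = some a ∧ p.getLast? = some b ∧ List.Chain' A p ∧ p.Nodup

/-- The arcs traversed by a path: the list of consecutive pairs of vertices. -/
def pathArcs {V : Type*} (p : List V) : List (V × V) :=
  p.zip p.tail

/-- The total weight of a path: the sum of the weights of its arcs. -/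
def pathWeight {V : Type*} (w : V → V → ℝ) (p : List V) : ℝ :=
  ((p.zip p.tail).map fun e => w e.1 e.2).sum

/-- `p` is a shortest (minimum total weight) directed path from `a` to `b`. -/
def IsShortestDiPath {V : Type*} (A : V → V → Prop) (w : V → V → ℝ) (a b : V)
    (p : List V) : Prop :=
  IsDiPath A a b p ∧ ∀ q, IsDiPath A a b q → pathWeight w p ≤ pathWeight w q


open List

theorem List.exists_eq_append_cons_append_cons_of_not_nodup {α : Type*} :
    ∀ {l : List α}, ¬ l.Nodup → ∃ x l₁ l₂ l₃, l = l₁ ++ x :: (l₂ ++ x :: l₃)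
  | [], h => absurd nodup_nil h
  | y :: t, h => by
    by_cases hy : y ∈ t
    · obtain ⟨s, s', rfl⟩ := append_of_mem hy
      exact ⟨y, [], s, s', rfl⟩
    · obtain ⟨x, l₁, l₂, l₃, rfl⟩ :=
        exists_eq_append_cons_append_cons_of_not_nodup fun ht => h (nodup_cons.2 ⟨hy, ht⟩)
      exact ⟨x, y :: l₁, l₂, l₃, rfl⟩

theorem List.exists_eq_append_cons_of_exists_mem {α : Type*} (P : α → Prop) :
    ∀ {l : List α}, (∃ x ∈ l, P x) → ∃ l₁ x l₂, l = l₁ ++ x :: l₂ ∧ P x ∧ ∀ y ∈ l₂, ¬ P y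
  | [], h => by simp at h
  | a :: t, h => by
    by_cases ht : ∃ x ∈ t, P x
    · obtain ⟨l₁, x, l₂, rfl, hx, hl₂⟩ := exists_eq_append_cons_of_exists_mem P ht
      exact ⟨a :: l₁, x, l₂, rfl, hx, hl₂⟩
    · obtain ⟨x, hx, hPx⟩ := h
      rcases mem_cons.1 hx with rfl | hx
      · exact ⟨[], x, t, rfl, hPx, fun y hy hPy => ht ⟨y, hy, hPy⟩⟩
      · exact absurd ⟨x, hx, hPx⟩ ht

section

variable {V : Type*} {A : V → V → Prop} {w : V → V → ℝ}

def IsDiWalk (A : V → V → Prop) (a b : V) (p : List V) : Prop :=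
  p.head? = some a ∧ p.getLast? = some b ∧ IsChain A p

theorem isDiPath_iff {a b : V} {p : List V} :
    IsDiPath A a b p ↔ IsDiWalk A a b p ∧ p.Nodup :=
  ⟨fun ⟨h₁, h₂, h₃, h₄⟩ => ⟨⟨h₁, h₂, h₃⟩, h₄⟩, fun ⟨⟨h₁, h₂, h₃⟩, h₄⟩ => ⟨h₁, h₂, h₃, h₄⟩⟩

theorem isDiWalk_append_cons {a b v : V} {p₁ p₂ : List V} :
    IsDiWalk A a b (p₁ ++ v :: p₂) ↔ IsDiWalk A a v (p₁ ++ [v]) ∧ IsDiWalk A v b (v :: p₂) := by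
  have hhead : (p₁ ++ v :: p₂).head? = (p₁ ++ [v]).head? := by cases p₁ <;> rfl
  rw [IsDiWalk, IsDiWalk, IsDiWalk, isChain_split, hhead, getLast?_append_cons, getLast?_concat,
    head?_cons]
  tauto

@[simp]
theorem pathWeight_cons_cons (w : V → V → ℝ) (a b : V) (l : List V) :
    pathWeight w (a :: b :: l) = w a b + pathWeight w (b :: l) := by
  simp [pathWeight]

theorem pathWeight_append_cons (w : V → V → ℝ) :
    ∀ (p₁ : List V) (v : V) (p₂ : List V),
      pathWeight w (p₁ ++ v :: p₂) = pathWeight w (p₁ ++ [v]) + pathWeight w (v :: p₂)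
  | [], _, _ => by simp [pathWeight]
  | [_], _, _ => by simp [pathWeight]
  | a :: b :: p₁, v, p₂ => by
    have ih := pathWeight_append_cons w (b :: p₁) v p₂
    simp only [cons_append, pathWeight_cons_cons] at ih ⊢
    rw [ih, add_assoc]

theorem pathWeight_nonneg (hw : ∀ x y, A x y → 0 ≤ w x y) :
    ∀ {p : List V}, IsChain A p → 0 ≤ pathWeight w p
  | [], _ | [_], _ => by simp [pathWeight]
  | a :: b :: l, hp => by
    rw [isChain_cons_cons] at hp
    rw [pathWeight_cons_cons]
    exact add_nonneg (hw a b hp.1) (pathWeight_nonneg hw hp.2)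

theorem IsDiWalk.exists_isDiPath_pathWeight_le (hw : ∀ x y, A x y → 0 ≤ w x y) {a b : V}
    {p : List V} (hp : IsDiWalk A a b p) :
    ∃ q, IsDiPath A a b q ∧ pathWeight w q ≤ pathWeight w p := by
  by_cases hnd : p.Nodup
  · exact ⟨p, isDiPath_iff.2 ⟨hp, hnd⟩, le_rfl⟩
  obtain ⟨x, l₁, l₂, l₃, rfl⟩ := exists_eq_append_cons_append_cons_of_not_nodup hnd
  have hcycle : l₁ ++ x :: (l₂ ++ x :: l₃) = (l₁ ++ x :: l₂) ++ x :: l₃ := by simp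
  have hinit : (l₁ ++ x :: l₂) ++ [x] = l₁ ++ x :: (l₂ ++ [x]) := by simp
  rw [hcycle, isDiWalk_append_cons, hinit, isDiWalk_append_cons] at hp
  obtain ⟨⟨hax, hxx⟩, hxb⟩ := hp
  obtain ⟨q, hq, hqw⟩ :=
    (isDiWalk_append_cons.2 ⟨hax, hxb⟩).exists_isDiPath_pathWeight_le hw
  refine ⟨q, hq, hqw.trans ?_⟩
  have e₁ := pathWeight_append_cons w (l₁ ++ x :: l₂) x l₃
  rw [hinit, pathWeight_append_cons w l₁ x (l₂ ++ [x])] at e₁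
  rw [hcycle, e₁, pathWeight_append_cons w l₁ x l₃]
  linarith [pathWeight_nonneg hw hxx.2.2]
termination_by p.length
decreasing_by subst_vars; simp

theorem IsDiPath.split {a b v : V} {p₁ p₂ : List V} (hp : IsDiPath A a b (p₁ ++ v :: p₂)) :
    IsDiPath A a v (p₁ ++ [v]) ∧ IsDiPath A v b (v :: p₂) := by
  rw [isDiPath_iff, isDiWalk_append_cons] at hp
  obtain ⟨⟨h₁, h₂⟩, hnd⟩ := hp
  refine ⟨isDiPath_iff.2 ⟨h₁, hnd.sublist ?_⟩, isDiPath_iff.2 ⟨h₂, hnd.sublist ?_⟩⟩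
  · exact ((nil_sublist p₂).cons_cons v).append_left p₁
  · exact sublist_append_right p₁ _

theorem IsShortestDiPath.prefix (hw : ∀ x y, A x y → 0 ≤ w x y) {a b v : V} {p₁ p₂ : List V}
    (hp : IsShortestDiPath A w a b (p₁ ++ v :: p₂)) : IsShortestDiPath A w a v (p₁ ++ [v]) := by
  refine ⟨hp.1.split.1, fun s hs => ?_⟩
  obtain ⟨s, rfl⟩ := getLast?_eq_some_iff.1 hs.2.1
  have hwalk : IsDiWalk A a b (s ++ v :: p₂) :=
    isDiWalk_append_cons.2 ⟨(isDiPath_iff.1 hs).1, (isDiPath_iff.1 hp.1.split.2).1⟩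
  obtain ⟨q, hq, hqw⟩ := hwalk.exists_isDiPath_pathWeight_le hw
  have hpq := hp.2 q hq
  rw [pathWeight_append_cons] at hpq hqw
  linarith

theorem IsShortestDiPath.append_cons_of_disjoint (hw : ∀ x y, A x y → 0 ≤ w x y)
    {a b b' v : V} {p₁ p₂ q₁ q₂ : List V} (hp : IsShortestDiPath A w a b (p₁ ++ v :: p₂))
    (hq : IsShortestDiPath A w a b' (q₁ ++ v :: q₂)) (hdisj : p₁.Disjoint q₂) :
    IsShortestDiPath A w a b' (p₁ ++ v :: q₂) := by
  obtain ⟨hp₁, -⟩ := hp.1.split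
  obtain ⟨hq₁, hq₂⟩ := hq.1.split
  have hvp₁ := (isDiPath_iff.1 hp₁).2
  rw [← concat_eq_append, nodup_concat] at hvp₁
  have hwalk : IsDiWalk A a b' (p₁ ++ v :: q₂) :=
    isDiWalk_append_cons.2 ⟨(isDiPath_iff.1 hp₁).1, (isDiPath_iff.1 hq₂).1⟩
  refine ⟨isDiPath_iff.2 ⟨hwalk, hvp₁.2.append hq₂.2.2.2 (disjoint_cons_right.2 ⟨hvp₁.1, hdisj⟩)⟩,
    fun t ht => ?_⟩
  have hpq := (hp.prefix hw).2 _ hq₁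
  have hqt := hq.2 t ht
  rw [pathWeight_append_cons] at hqt ⊢
  linarith

theorem mk_mem_pathArcs_append_cons_cons (u v : V) :
    ∀ l₁ l₂ : List V, (u, v) ∈ pathArcs (l₁ ++ u :: v :: l₂)
  | [], _ => by simp [pathArcs]
  | [_], _ => by simp [pathArcs]
  | a :: b :: l₁, l₂ => by
    have ih := mk_mem_pathArcs_append_cons_cons u v (b :: l₁) l₂
    simp only [pathArcs, cons_append, tail_cons, zip_cons_cons, mem_cons] at ih ⊢
    exact Or.inr ih

theorem snd_mem_tail_of_mem_pathArcs {p : List V} {e : V × V} (he : e ∈ pathArcs p) :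
    e.2 ∈ p.tail :=
  (of_mem_zip he).2

theorem IsDiPath.head_notMem_tail {a b : V} {p : List V} (hp : IsDiPath A a b p) :
    a ∉ p.tail := by
  obtain ⟨hhead, -, -, hnd⟩ := hp
  cases p with
  | nil => simp at hhead
  | cons x t =>
    obtain rfl : x = a := by simpa using hhead
    exact (nodup_cons.1 hnd).1

theorem IsShortestDiPath.exists_mem_pathArcs_of_mem_of_mem (hw : ∀ x y, A x y → 0 ≤ w x y)
    {a b b' v : V} {p q : List V} (hp : IsShortestDiPath A w a b p)
    (hq : IsShortestDiPath A w a b' q) (hvp : v ∈ p) (hvq : v ∈ q) (hva : v ≠ a) :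
    ∃ r, IsShortestDiPath A w a b' r ∧ ∃ e ∈ pathArcs p, e ∈ pathArcs r := by
  obtain ⟨q₁, v', q₂, rfl, ⟨hv'p, hv'a⟩, hq₂⟩ :=
    exists_eq_append_cons_of_exists_mem (fun x => x ∈ p ∧ x ≠ a) ⟨v, hvq, hvp, hva⟩
  obtain ⟨p₁, p₂, rfl⟩ := append_of_mem hv'p
  obtain rfl | ⟨p₁, u, rfl⟩ := eq_nil_or_concat p₁
  · exact absurd (by simpa using hp.1.1) hv'a
  rw [concat_eq_append] at hp hq₂ ⊢
  have haq₂ : a ∉ q₂ := fun h => hq.1.head_notMem_tail (by cases q₁ <;> simp [h])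
  have hdisj : (p₁ ++ [u]).Disjoint q₂ := fun x hxp hxq => by
    have hxa : x = a := by_contra fun hxa => hq₂ x hxq ⟨mem_append_left _ hxp, hxa⟩
    exact haq₂ (hxa ▸ hxq)
  refine ⟨_, hp.append_cons_of_disjoint hw hq hdisj, (u, v'), ?_, ?_⟩ <;>
    simpa using mk_mem_pathArcs_append_cons_cons u v' p₁ _

theorem IsDiPath.snd_ne_of_mem_pathArcs {a b : V} {p : List V} {e : V × V}
    (hp : IsDiPath A a b p) (he : e ∈ pathArcs p) : e.2 ≠ a := fun h =>
  hp.head_notMem_tail (h ▸ snd_mem_tail_of_mem_pathArcs he)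

end

/-- For shortest-path sets `P(c,f)` and `P(c,f')` in a nonnegatively
arc-weighted digraph: no path in `P(c,f)` shares an arc with any path in `P(c,f')`
iff no path in `P(c,f)` shares a vertex other than `c` with any path in `P(c,f')`. -/
theorem shortest_path_sets_arc_disjoint_iff_vertex_disjoint
    {V : Type*} (A : V → V → Prop) (w : V → V → ℝ)
    (hw : ∀ x y, A x y → 0 ≤ w x y)
    (c f f' : V) :
    (∀ p q, IsShortestDiPath A w c f p → IsShortestDiPath A w c f' q →
      ∀ e ∈ pathArcs p, e ∉ pathArcs q) ↔
    (∀ p q, IsShortestDiPath A w c f p → IsShortestDiPath A w c f' q →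
      ∀ v ∈ p, v ∈ q → v = c) := by
  constructor
  · intro h p q hp hq v hvp hvq
    by_contra hvc
    obtain ⟨r, hr, e, hep, her⟩ := hp.exists_mem_pathArcs_of_mem_of_mem hw hq hvp hvq hvc
    exact h p r hp hr e hep her
  · intro h p q hp hq e hep heq
    exact hp.1.snd_ne_of_mem_pathArcs hep <| h p q hp hq e.2
      (mem_of_mem_tail (snd_mem_tail_of_mem_pathArcs hep))
      (mem_of_mem_tail (snd_mem_tail_of_mem_pathArcs heq))
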